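/- Let 0 < r2 < r1 < 1/e and 0 < c2 ≤ r1, and define u(r) = −c2·∫_r^∞ η(4s/r1)·ζ(s/(4r2)) / (s·log(1/s)) ds. Then ∫₀^{r1} e^{−u(r)} dr ≤ 3·r1. -/

import Mathlib

/-- The fixed pair of smooth cutoff functions used in the cutoff-function
construction. -/
def CutoffPair (ζ η : ℝ → ℝ) : Prop :=
  ContDiff ℝ (⊤ : ℕ∞) ζ ∧ ContDiff ℝ (⊤ : ℕ∞) η ∧
  (∀ x ∈ Set.Icc (0 : ℝ) (1 / 2), ζ x = 0) ∧ (∀ x ≥ (1 : ℝ), ζ x = 1) ∧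
  (∀ x ≥ (0 : ℝ), 0 ≤ deriv ζ x ∧ deriv ζ x ≤ 4 ∧ |deriv (deriv ζ) x| ≤ 16) ∧
  (∀ x ∈ Set.Icc (0 : ℝ) (1 / 2), η x = 1) ∧ (∀ x ≥ (1 : ℝ), η x = 0) ∧
  (∀ x ≥ (0 : ℝ), -4 ≤ deriv η x ∧ deriv η x ≤ 0 ∧ |deriv (deriv η) x| ≤ 16)

/-- `u(r) = -c2 ∫_r^∞ η(4s/r1) ζ(s/(4r2)) / (s log(1/s)) ds`. -/
noncomputable def uFun (ζ η : ℝ → ℝ) (c2 r1 r2 r : ℝ) : ℝ :=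
  -c2 * ∫ s in Set.Ioi r, η (4 * s / r1) * ζ (s / (4 * r2)) / (s * Real.log (1 / s))

open MeasureTheory Set

/-- auxiliary integrand -/
noncomputable def gAux (ζ η : ℝ → ℝ) (r1 r2 s : ℝ) : ℝ :=
  η (4 * s / r1) * ζ (s / (4 * r2)) / (s * Real.log (1 / s))

lemma uFun_eq (ζ η : ℝ → ℝ) (c2 r1 r2 r : ℝ) :
    uFun ζ η c2 r1 r2 r = -c2 * ∫ s in Set.Ioi r, gAux ζ η r1 r2 s := rfl

lemma zeta_range (ζ η : ℝ → ℝ) (hcut : CutoffPair ζ η) :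
    ∀ x : ℝ, 0 ≤ x → 0 ≤ ζ x ∧ ζ x ≤ 1 := by
  obtain ⟨hζs, hηs, hζ0, hζ1, hζd, hη0, hη1, hηd⟩ := hcut
  have hmono : MonotoneOn ζ (Set.Ici (0:ℝ)) := by
    apply monotoneOn_of_deriv_nonneg (convex_Ici 0) hζs.continuous.continuousOn
      ((hζs.differentiable (by simp)).differentiableOn)
    intro x hx
    exact (hζd x (le_of_lt (by simpa using hx))).1
  intro x hx
  have h0 : ζ 0 = 0 := hζ0 0 ⟨le_rfl, by norm_num⟩
  constructor
  · have := hmono (Set.self_mem_Ici) (Set.mem_Ici.mpr hx) hx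
    linarith
  · rcases le_or_gt x 1 with h|h
    · have := hmono (Set.mem_Ici.mpr hx) (Set.mem_Ici.mpr (by norm_num : (0:ℝ) ≤ 1)) h
      rw [hζ1 1 le_rfl] at this
      exact this
    · rw [hζ1 x h.le]

lemma eta_range (ζ η : ℝ → ℝ) (hcut : CutoffPair ζ η) :
    ∀ x : ℝ, 0 ≤ x → 0 ≤ η x ∧ η x ≤ 1 := by
  obtain ⟨hζs, hηs, hζ0, hζ1, hζd, hη0, hη1, hηd⟩ := hcut
  have hmono : AntitoneOn η (Set.Ici (0:ℝ)) := by
    apply antitoneOn_of_deriv_nonpos (convex_Ici 0) hηs.continuous.continuousOn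
      ((hηs.differentiable (by simp)).differentiableOn)
    intro x hx
    exact (hηd x (le_of_lt (by simpa using hx))).2.1
  intro x hx
  have h0 : η 0 = 1 := hη0 0 ⟨le_rfl, by norm_num⟩
  constructor
  · rcases le_or_gt x 1 with h|h
    · have := hmono (Set.mem_Ici.mpr hx) (Set.mem_Ici.mpr (by norm_num : (0:ℝ) ≤ 1)) h
      rw [hη1 1 le_rfl] at this
      exact this
    · rw [hη1 x h.le]
  · have := hmono (Set.self_mem_Ici) (Set.mem_Ici.mpr hx) hx
    linarith

set_option maxHeartbeats 1000000 in
/-- the distance estimate `∫₀^{r1} e^{-u} dr ≤ 3 r1`. -/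
theorem stmt_11 (ζ η : ℝ → ℝ) (hcut : CutoffPair ζ η)
    (r1 r2 c2 : ℝ) (hr20 : 0 < r2) (hr21 : r2 < r1)
    (hr1 : r1 < Real.exp (-1)) (hc20 : 0 < c2) (hc21 : c2 ≤ r1) :
    (∫ r in (0 : ℝ)..r1, Real.exp (-(uFun ζ η c2 r1 r2 r))) ≤ 3 * r1 := by
  have hζr := zeta_range ζ η hcut
  have hηr := eta_range ζ η hcut
  obtain ⟨hζs, hηs, hζ0, hζ1, hζd, hη0, hη1, hηd⟩ := hcut
  have hr10 : 0 < r1 := hr20.trans hr21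
  set e1 : ℝ := Real.exp 1 with he1def
  have he1p : (0:ℝ) < e1 := Real.exp_pos 1
  have he1 : (2.7182818283 : ℝ) < e1 := Real.exp_one_gt_d9
  have hr1e : r1 < e1⁻¹ := by rwa [Real.exp_neg, ← he1def] at hr1
  have hexp1lt : Real.exp (-1 : ℝ) < 1 := by
    rw [show (1:ℝ) = Real.exp 0 by rw [Real.exp_zero]]
    exact Real.exp_lt_exp.mpr (by norm_num)
  have hr11 : r1 < 1 := hr1.trans hexp1lt
  set b : ℝ := r1 / 4 with hbdef
  have hb0 : 0 < b := by positivity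
  have hbr1 : b < r1 := by simp only [hbdef]; linarith
  have hbe : b < Real.exp (-1) := hbr1.trans hr1
  have hb1 : b < 1 := hbr1.trans hr11
  set g : ℝ → ℝ := gAux ζ η r1 r2 with hgdef
  -- log lower bound for small arguments
  have hlog1 : ∀ x : ℝ, 0 < x → x < Real.exp (-1) → 1 ≤ -Real.log x := by
    intro x h0 h1
    have := Real.log_lt_log h0 h1
    rw [Real.log_exp] at this
    linarith
  -- vanishing of g for s ≥ b
  have hgb : ∀ s : ℝ, b ≤ s → g s = 0 := by
    intro s hs
    have h1 : (1:ℝ) ≤ 4 * s / r1 := by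
      rw [le_div_iff₀ hr10]
      simp only [hbdef] at hs
      linarith
    simp [hgdef, gAux, hη1 _ h1]
  -- vanishing of g for small s
  have hgsmall : ∀ s : ℝ, 0 ≤ s → s ≤ 2 * r2 → g s = 0 := by
    intro s h0 h1
    have hmem : s / (4 * r2) ∈ Set.Icc (0:ℝ) (1/2) := by
      constructor
      · positivity
      · rw [div_le_iff₀ (by positivity)]
        linarith
    simp [hgdef, gAux, hζ0 _ hmem]
  -- nonnegativity of g on positives
  have hgnn : ∀ s : ℝ, 0 < s → 0 ≤ g s := by
    intro s hs
    rcases le_or_gt b s with h|h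
    · rw [hgb s h]
    · have hs1 : s < 1 := h.trans hb1
      apply div_nonneg
      · exact mul_nonneg (hηr _ (by positivity)).1 (hζr _ (by positivity)).1
      · apply mul_nonneg hs.le
        apply Real.log_nonneg
        rw [le_div_iff₀ hs]
        linarith
  -- upper bound of g by 1/(s·(-log s))
  have hgle : ∀ s : ℝ, 0 < s → s < 1 → g s ≤ (s * -Real.log s)⁻¹ := by
    intro s hs0 hs1
    have hL : 0 < -Real.log s := by
      have := Real.log_neg hs0 hs1
      linarith
    have hD : 0 < s * -Real.log s := by positivity
    have hnum : η (4 * s / r1) * ζ (s / (4 * r2)) ≤ 1 := by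
      have h1 := hηr (4 * s / r1) (by positivity)
      have h2 := hζr (s / (4 * r2)) (by positivity)
      nlinarith [h1.1, h1.2, h2.1, h2.2]
    have hnum0 : 0 ≤ η (4 * s / r1) * ζ (s / (4 * r2)) :=
      mul_nonneg (hηr _ (by positivity)).1 (hζr _ (by positivity)).1
    have hrw : s * Real.log (1 / s) = s * -Real.log s := by
      rw [one_div, Real.log_inv]
    calc g s = η (4 * s / r1) * ζ (s / (4 * r2)) / (s * -Real.log s) := by
          rw [hgdef]; unfold gAux; rw [hrw]
      _ ≤ 1 / (s * -Real.log s) := by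
          apply div_le_div₀ (by norm_num) hnum hD le_rfl
      _ = (s * -Real.log s)⁻¹ := one_div _
  -- measurability of g
  have hgmeas : Measurable g := by
    have h1 : Measurable fun s : ℝ => η (4 * s / r1) :=
      hηs.continuous.measurable.comp ((measurable_id.const_mul 4).div_const r1)
    have h2 : Measurable fun s : ℝ => ζ (s / (4 * r2)) :=
      hζs.continuous.measurable.comp (measurable_id.div_const (4 * r2))
    have h3 : Measurable fun s : ℝ => s * Real.log (1 / s) :=
      measurable_id.mul (Real.measurable_log.comp (measurable_one.div measurable_id))
    exact (h1.mul h2).div h3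
  -- global integrability on Ioi 0
  set M : ℝ := (2 * r2 * -Real.log b)⁻¹ with hMdef
  have hLb : 1 ≤ -Real.log b := hlog1 b hb0 hbe
  have hM0 : 0 ≤ M := by
    rw [hMdef]
    positivity
  have hgint : IntegrableOn g (Set.Ioi (0:ℝ)) := by
    apply Integrable.mono' (g := (Set.Icc (2*r2) b).indicator fun _ => M)
    · exact ((integrableOn_const measure_Icc_lt_top.ne).integrable_indicator
        measurableSet_Icc).integrableOn
    · exact hgmeas.aestronglyMeasurable.restrict
    · rw [ae_restrict_iff' measurableSet_Ioi]
      apply Filter.Eventually.of_forall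
      intro s hs
      have hs0 : (0:ℝ) < s := hs
      by_cases hmem : s ∈ Set.Icc (2*r2) b
      · rw [Set.indicator_of_mem hmem]
        rw [Real.norm_eq_abs, abs_of_nonneg (hgnn s hs0)]
        have hsb : s ≤ b := hmem.2
        have hs1 : s < 1 := lt_of_le_of_lt hsb hb1
        have hLs : -Real.log b ≤ -Real.log s := by
          have := Real.log_le_log hs0 hsb
          linarith
        have hD : 2 * r2 * -Real.log b ≤ s * -Real.log s := by
          apply mul_le_mul hmem.1 hLs (by linarith) (by linarith)
        calc g s ≤ (s * -Real.log s)⁻¹ := hgle s hs0 hs1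
          _ ≤ M := by
              rw [hMdef]
              apply inv_anti₀ (by positivity) hD
      · rw [Set.indicator_of_notMem hmem]
        have hz : g s = 0 := by
          rcases le_or_gt b s with h|h
          · exact hgb s h
          · apply hgsmall s hs0.le
            by_contra hcon
            push_neg at hcon
            exact hmem ⟨hcon.le, h.le⟩
        simp [hz]
  -- splitting lemma
  have hsplit : ∀ p q : ℝ, 0 < p → p ≤ q →
      (∫ s in Set.Ioi p, g s) = (∫ s in Set.Ioc p q, g s) + ∫ s in Set.Ioi q, g s := by
    intro p q hp hpq
    rw [← setIntegral_union (Set.Ioc_disjoint_Ioi le_rfl) measurableSet_Ioi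
      (hgint.mono_set (Set.Ioc_subset_Ioi_self.trans (Set.Ioi_subset_Ioi hp.le)))
      (hgint.mono_set (Set.Ioi_subset_Ioi (hp.le.trans hpq))),
      Set.Ioc_union_Ioi_eq_Ioi hpq]
  -- vanishing tail
  have htail : ∀ q : ℝ, b ≤ q → (∫ s in Set.Ioi q, g s) = 0 := by
    intro q hq
    rw [setIntegral_congr_fun measurableSet_Ioi
      (fun s hs => hgb s (hq.trans (le_of_lt hs)) : Set.EqOn g (fun _ => (0:ℝ)) _)]
    simp
  -- antitone surrogate w
  set w : ℝ → ℝ := fun r => ∫ s in Set.Ioi (max r r2), g s with hwdef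
  have hw_anti : Antitone w := by
    intro a a' h
    apply setIntegral_mono_set
      (hgint.mono_set (Set.Ioi_subset_Ioi (le_max_of_le_right hr20.le)))
    · filter_upwards [ae_restrict_mem measurableSet_Ioi] with s hs
      exact hgnn s ((hr20.trans_le (le_max_right a r2)).trans hs)
    · exact (Set.Ioi_subset_Ioi (max_le_max h le_rfl)).eventuallyLE
  have hvw : ∀ r : ℝ, 0 < r → (∫ s in Set.Ioi r, g s) = w r := by
    intro r hr
    rcases le_or_gt r2 r with h|h
    · simp only [hwdef, max_eq_left h]
    · rw [hsplit r r2 hr h.le]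
      have hz : (∫ s in Set.Ioc r r2, g s) = 0 := by
        rw [setIntegral_congr_fun measurableSet_Ioc
          (fun s hs => hgsmall s (hr.trans hs.1).le (by linarith [hs.2]) :
            Set.EqOn g (fun _ => (0:ℝ)) _)]
        simp
      rw [hz, zero_add]
      simp only [hwdef, max_eq_right h.le]
  -- the exponent
  set c : ℝ := c2 / e1 with hcdef
  have hc0 : 0 < c := by positivity
  have hc17 : c ≤ 1 / 7 := by
    rw [hcdef, div_le_div_iff₀ he1p (by norm_num : (0:ℝ) < 7)]
    have h1 : c2 ≤ e1⁻¹ := hc21.trans hr1e.le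
    have h2 : e1⁻¹ * e1 = 1 := inv_mul_cancel₀ he1p.ne'
    nlinarith
  -- pointwise bound
  have hpt : ∀ r ∈ Set.Ioc (0:ℝ) r1,
      Real.exp (-(uFun ζ η c2 r1 r2 r)) ≤ r ^ (-c) := by
    rintro r ⟨hr0, hrr1⟩
    have huF : -(uFun ζ η c2 r1 r2 r) = c2 * ∫ s in Set.Ioi r, g s := by
      rw [uFun_eq, ← hgdef]; ring
    have hLr : 1 ≤ -Real.log r := hlog1 r hr0 (lt_of_le_of_lt hrr1 hr1)
    have hI : (∫ s in Set.Ioi r, g s) ≤ Real.log (-Real.log r) := by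
      rcases le_or_gt b r with h|h
      · rw [htail r h]
        exact Real.log_nonneg hLr
      · rw [hsplit r b hr0 h.le, htail b le_rfl, add_zero]
        have hcont : ContinuousOn (fun s : ℝ => (s * -Real.log s)⁻¹) (Set.Icc r b) := by
          apply ContinuousOn.inv₀
          · apply continuousOn_id.mul
            apply ContinuousOn.neg
            apply Real.continuousOn_log.mono
            intro s hs
            exact ne_of_gt (hr0.trans_le hs.1)
          · intro s hs
            have hs0 : 0 < s := hr0.trans_le hs.1
            have hs1 : s < 1 := lt_of_le_of_lt hs.2 hb1
            have hL2 : 0 < -Real.log s := by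
              have := Real.log_neg hs0 hs1
              linarith
            exact (mul_pos hs0 hL2).ne'
        have hcomp : (∫ s in Set.Ioc r b, g s) ≤ ∫ s in Set.Ioc r b, (s * -Real.log s)⁻¹ := by
          apply setIntegral_mono_on
            (hgint.mono_set (Set.Ioc_subset_Ioi_self.trans (Set.Ioi_subset_Ioi hr0.le)))
            ((hcont.integrableOn_Icc).mono_set Set.Ioc_subset_Icc_self)
            measurableSet_Ioc
          intro s hs
          exact hgle s (hr0.trans hs.1) (lt_of_le_of_lt hs.2 hb1)
        have hftc : (∫ s in r..b, (s * -Real.log s)⁻¹) =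
            (fun t => -Real.log (-Real.log t)) b - (fun t => -Real.log (-Real.log t)) r := by
          apply intervalIntegral.integral_eq_sub_of_hasDerivAt
            (f := fun t => -Real.log (-Real.log t)) (f' := fun s => (s * -Real.log s)⁻¹)
          · intro s hs
            rw [Set.uIcc_of_le h.le] at hs
            have hs0 : 0 < s := hr0.trans_le hs.1
            have hs1 : s < 1 := lt_of_le_of_lt hs.2 hb1
            have hLpos : 0 < -Real.log s := by
              have := Real.log_neg hs0 hs1
              linarith
            have h1 : HasDerivAt (fun t : ℝ => -Real.log t) (-s⁻¹) s :=
              (Real.hasDerivAt_log hs0.ne').neg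
            have h2 : HasDerivAt Real.log (-Real.log s)⁻¹ (-Real.log s) :=
              Real.hasDerivAt_log (ne_of_gt hLpos)
            have h3 : HasDerivAt (fun t : ℝ => Real.log (-Real.log t))
                ((-Real.log s)⁻¹ * -s⁻¹) s := by have := h2.comp s h1; exact this
            have h4 := h3.neg
            convert h4 using 1
            · rfl
            rw [mul_inv]
            ring
          · exact hcont.intervalIntegrable_of_Icc h.le
        have hIoc : (∫ s in Set.Ioc r b, (s * -Real.log s)⁻¹) =
            ∫ s in r..b, (s * -Real.log s)⁻¹ :=
          (intervalIntegral.integral_of_le h.le).symm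
        have hLbnn : 0 ≤ Real.log (-Real.log b) := Real.log_nonneg hLb
        rw [hIoc, hftc] at hcomp
        simp only at hcomp
        linarith
    have hstep2 : c2 * (∫ s in Set.Ioi r, g s) ≤ c * -Real.log r := by
      have hy : 0 < -Real.log r := by linarith
      have hlogle : Real.log (-Real.log r) ≤ -Real.log r / e1 := by
        have h1 := Real.log_le_sub_one_of_pos (div_pos hy he1p)
        rw [Real.log_div hy.ne' he1p.ne', he1def, Real.log_exp] at h1
        linarith
      calc c2 * (∫ s in Set.Ioi r, g s) ≤ c2 * Real.log (-Real.log r) := by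
            apply mul_le_mul_of_nonneg_left hI hc20.le
        _ ≤ c2 * (-Real.log r / e1) := mul_le_mul_of_nonneg_left hlogle hc20.le
        _ = c * -Real.log r := by rw [hcdef]; ring
    rw [huF, Real.rpow_def_of_pos hr0]
    apply Real.exp_le_exp.mpr
    calc c2 * (∫ s in Set.Ioi r, g s) ≤ c * -Real.log r := hstep2
      _ = Real.log r * -c := by ring
  -- integrability of r^(-c)
  have hrpow_int : IntegrableOn (fun r : ℝ => r ^ (-c)) (Set.Ioc 0 r1) :=
    (intervalIntegral.intervalIntegrable_rpow' (by linarith : (-1:ℝ) < -c)).1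
  -- integrability of exp(-u)
  have hexp_int : IntegrableOn (fun r => Real.exp (-(uFun ζ η c2 r1 r2 r))) (Set.Ioc 0 r1) := by
    apply Integrable.mono' hrpow_int
    · have hmeasw : Measurable fun r => Real.exp (c2 * w r) :=
        Real.measurable_exp.comp (measurable_const.mul hw_anti.measurable)
      apply hmeasw.aestronglyMeasurable.restrict.congr
      rw [Filter.EventuallyEq, ae_restrict_iff' measurableSet_Ioc]
      apply Filter.Eventually.of_forall
      intro r hr
      rw [show -(uFun ζ η c2 r1 r2 r) = c2 * ∫ s in Set.Ioi r, g s by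
        rw [uFun_eq, ← hgdef]; ring, hvw r hr.1]
    · rw [ae_restrict_iff' measurableSet_Ioc]
      apply Filter.Eventually.of_forall
      intro r hr
      rw [Real.norm_eq_abs, abs_of_pos (Real.exp_pos _)]
      exact hpt r hr
  -- numeric facts for the final bound
  have hy1 : 1 ≤ -Real.log r1 := hlog1 r1 hr10 hr1
  have hylog : -Real.log r1 ≤ (e1 * r1)⁻¹ := by
    have h1 := Real.log_le_sub_one_of_pos (show (0:ℝ) < (e1 * r1)⁻¹ by positivity)
    rw [Real.log_inv, Real.log_mul he1p.ne' hr10.ne', he1def, Real.log_exp] at h1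
    linarith
  have hcy : c * -Real.log r1 ≤ 1 / 7 := by
    have h1 : c ≤ r1 / e1 := by
      rw [hcdef]
      exact (div_le_div_iff_of_pos_right he1p).mpr hc21
    have h2 : c * -Real.log r1 ≤ (r1 / e1) * (e1 * r1)⁻¹ :=
      mul_le_mul h1 hylog (by linarith) (by positivity)
    have h3 : (r1 / e1) * (e1 * r1)⁻¹ = (e1 * e1)⁻¹ := by
      rw [mul_inv, div_eq_mul_inv, mul_inv]
      field_simp
    have h4 : (7:ℝ) ≤ e1 * e1 := by nlinarith
    have h5 : (e1 * e1)⁻¹ ≤ (7:ℝ)⁻¹ := inv_anti₀ (by norm_num) h4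
    rw [h3] at h2
    calc c * -Real.log r1 ≤ (e1 * e1)⁻¹ := h2
      _ ≤ (7:ℝ)⁻¹ := h5
      _ = 1 / 7 := by norm_num
  have hA : r1 ^ (-c) ≤ 7 / 6 := by
    rw [Real.rpow_def_of_pos hr10, show Real.log r1 * -c = c * -Real.log r1 by ring]
    calc Real.exp (c * -Real.log r1) ≤ Real.exp (1/7) := Real.exp_le_exp.mpr hcy
      _ ≤ 7 / 6 := by
          have h := Real.add_one_le_exp (-(1/7) : ℝ)
          rw [Real.exp_neg] at h
          have hp := Real.exp_pos (1/7 : ℝ)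
          have h2 := mul_le_mul_of_nonneg_left h hp.le
          rw [mul_inv_cancel₀ hp.ne'] at h2
          linarith
  -- conclusion
  rw [intervalIntegral.integral_of_le hr10.le]
  calc (∫ r in Set.Ioc (0:ℝ) r1, Real.exp (-(uFun ζ η c2 r1 r2 r)))
      ≤ ∫ r in Set.Ioc (0:ℝ) r1, r ^ (-c) :=
        setIntegral_mono_on hexp_int hrpow_int measurableSet_Ioc hpt
    _ = ∫ r in (0:ℝ)..r1, r ^ (-c) := (intervalIntegral.integral_of_le hr10.le).symm
    _ = (r1 ^ (-c + 1) - (0:ℝ) ^ (-c + 1)) / (-c + 1) :=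
        integral_rpow (Or.inl (by linarith : (-1:ℝ) < -c))
    _ ≤ 3 * r1 := by
        rw [Real.zero_rpow (by intro hz; linarith : -c + 1 ≠ 0), sub_zero,
          Real.rpow_add hr10, Real.rpow_one]
        have hApos : 0 < r1 ^ (-c) := Real.rpow_pos_of_pos hr10 _
        rw [div_le_iff₀ (by linarith : (0:ℝ) < -c + 1)]
        nlinarith [mul_le_mul_of_nonneg_right hA hr10.le]
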